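/- Let (T₁, T₂) be a twisted triality pair, K(x) = conj(T₁(x̄)), and let D : 𝕆³ → 𝕆³ be the ℂ-linear bijection D(x, y, z) = (T₁(x), T₁(y), T₂(z)). Then for every A ∈ J₃(𝕆), N_{(T₁,T₂)·A} ∘ D = D ∘ N_A. In particular det(N_{(T₁,T₂)·A}) = det(N_A), and (x, y, z) ∈ ker(N_A) if and only if D(x, y, z) ∈ ker(N_{(T₁,T₂)·A}). -/

import Mathlib

noncomputable section

open scoped Quaternion

/-- The complexified quaternions. -/
abbrev Hq : Type := Quaternion ℂ

theorem q_mul_smul (t : ℂ) (a b : Hq) : a * (t • b) = t • (a * b) := by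
  rw [← Quaternion.coe_mul_eq_smul, ← Quaternion.coe_mul_eq_smul, ← mul_assoc,
    ← Quaternion.coe_commutes, mul_assoc]

theorem q_smul_mul (t : ℂ) (a b : Hq) : (t • a) * b = t • (a * b) := by
  rw [← Quaternion.coe_mul_eq_smul, ← Quaternion.coe_mul_eq_smul, mul_assoc]

/-- The complexified octonions, via the Cayley–Dickson construction. -/
abbrev Oct : Type := Hq × Hq

namespace Oct

/-- Octonion multiplication (Cayley–Dickson construction). -/
def omul (x y : Oct) : Oct := (x.1 * y.1 - star y.2 * x.2, y.2 * x.1 + x.2 * star y.1)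

/-- Octonion conjugation. -/
def oconj (x : Oct) : Oct := (star x.1, -x.2)

/-- The unit octonion. -/
def oone : Oct := (1, 0)

/-- Real part of an octonion: the unique scalar with `x + oconj x = (2 * oRe x) • oone`. -/
def oRe (x : Oct) : ℂ := x.1.re

/-- Squared norm of an octonion: the unique scalar with `omul x (oconj x) = onormSq x • oone`. -/
def onormSq (x : Oct) : ℂ := Quaternion.normSq x.1 + Quaternion.normSq x.2

theorem omul_add (z x y : Oct) : omul z (x + y) = omul z x + omul z y := by
  simp only [omul, Prod.fst_add, Prod.snd_add, star_add, mul_add, add_mul, Prod.mk_add_mk,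
    Prod.mk.injEq]
  constructor <;> rw [show ∀ u v : Hq, star (u + v) = star u + star v from fun u v => star_add u v] <;>
    simp only [mul_add, add_mul] <;> abel

theorem add_omul (x y z : Oct) : omul (x + y) z = omul x z + omul y z := by
  simp only [omul, Prod.fst_add, Prod.snd_add, star_add, mul_add, add_mul, Prod.mk_add_mk,
    Prod.mk.injEq]
  constructor <;> abel

theorem omul_smul (t : ℂ) (z x : Oct) : omul z (t • x) = t • omul z x := by
  simp only [omul, Prod.smul_fst, Prod.smul_snd, Quaternion.star_smul, q_smul_mul,
    q_mul_smul, Prod.smul_mk, smul_sub, smul_add]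

theorem smul_omul (t : ℂ) (x z : Oct) : omul (t • x) z = t • omul x z := by
  simp only [omul, Prod.smul_fst, Prod.smul_snd, Quaternion.star_smul, q_smul_mul,
    q_mul_smul, Prod.smul_mk, smul_sub, smul_add]

/-- Left multiplication `L_z` as a `ℂ`-linear endomorphism of the octonions. -/
def Lmul (z : Oct) : Oct →ₗ[ℂ] Oct where
  toFun x := omul z x
  map_add' x y := omul_add z x y
  map_smul' t x := omul_smul t z x

/-- Right multiplication `R_z` as a `ℂ`-linear endomorphism of the octonions. -/
def Rmul (z : Oct) : Oct →ₗ[ℂ] Oct where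
  toFun x := omul x z
  map_add' x y := add_omul x y z
  map_smul' t x := smul_omul t x z

end Oct

namespace Oct

/-- The octonionic determinant of the hermitian matrix
`[[λ₁, c, b̄], [c̄, λ₂, a], [b, ā, λ₃]]`. -/
def detO (l1 l2 l3 : ℂ) (a b c : Oct) : ℂ :=
  l1 * l2 * l3 + 2 * oRe (omul c (omul a b)) - l1 * onormSq a - l2 * onormSq b - l3 * onormSq c

/-- The associator `[c,b,a] = (c·b)·a − c·(b·a)`. -/
def assoc (c b a : Oct) : Oct := omul (omul c b) a - omul c (omul b a)

/-- `φ(c,b,a) = (1/2)·Re((c·b̄ − b̄·c)·a)`. -/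
def phi (c b a : Oct) : ℂ := (1 / 2) * oRe (omul (omul c (oconj b) - omul (oconj b) c) a)

/-- The Ogievetskiî–Dray–Manogue sextic. -/
def SODM (l1 l2 l3 : ℂ) (a b c : Oct) : ℂ :=
  detO l1 l2 l3 a b c ^ 2 - 4 * phi c b a * detO l1 l2 l3 a b c - onormSq (assoc c b a)

/-- The Cartan cubic `C'` of the hermitian matrix `[[λ₁, c̄, ā], [c, λ₂, b], [a, b̄, λ₃]]`. -/
def cartan' (l1 l2 l3 : ℂ) (a b c : Oct) : ℂ :=
  detO l1 l2 l3 a b c - 2 * oRe (omul c (omul a b)) + 2 * oRe (omul (oconj c) (omul b a))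

/-- The sextic `𝔖`. -/
def frakS (l1 l2 l3 : ℂ) (a b c : Oct) : ℂ :=
  (l1 * onormSq a + l2 * onormSq b + l3 * onormSq c - l1 * l2 * l3) ^ 2
    - 4 * (l1 * onormSq a + l2 * onormSq b + l3 * onormSq c - l1 * l2 * l3)
        * oRe c * oRe (omul a b)
    + 4 * (onormSq b * onormSq a * oRe c ^ 2 + onormSq c * oRe (omul a b) ^ 2
        - onormSq a * onormSq b * onormSq c)

/-- The endomorphism `M_A` of `𝕆³` attached to
`A = [[λ₁, c, b̄], [c̄, λ₂, a], [b, ā, λ₃]] ∈ J₃(𝕆)`. -/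
def MA (l1 l2 l3 : ℂ) (a b c : Oct) : Oct × Oct × Oct →ₗ[ℂ] Oct × Oct × Oct where
  toFun p := (l1 • p.1 + omul c p.2.1 + omul (oconj b) p.2.2,
              omul (oconj c) p.1 + l2 • p.2.1 + omul a p.2.2,
              omul b p.1 + omul (oconj a) p.2.1 + l3 • p.2.2)
  map_add' p q := by
    simp only [Prod.fst_add, Prod.snd_add, omul_add, smul_add, Prod.mk_add_mk, Prod.mk.injEq]
    refine ⟨?_, ?_, ?_⟩ <;> abel
  map_smul' t p := by
    simp only [Prod.smul_fst, Prod.smul_snd, omul_smul, smul_comm t, Prod.smul_mk, smul_add,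
      RingHom.id_apply]

/-- The endomorphism `N_A` of `𝕆³` of the twisted octonionic eigenvalue problem. -/
def NA (l1 l2 l3 : ℂ) (a b c : Oct) : Oct × Oct × Oct →ₗ[ℂ] Oct × Oct × Oct where
  toFun p := (l1 • p.1 + omul p.2.1 c + omul (oconj b) p.2.2,
              omul p.1 (oconj c) + l2 • p.2.1 + omul a p.2.2,
              omul b p.1 + omul (oconj a) p.2.1 + l3 • p.2.2)
  map_add' p q := by
    simp only [Prod.fst_add, Prod.snd_add, omul_add, add_omul, smul_add, Prod.mk_add_mk,
      Prod.mk.injEq]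
    refine ⟨?_, ?_, ?_⟩ <;> abel
  map_smul' t p := by
    simp only [Prod.smul_fst, Prod.smul_snd, omul_smul, smul_omul, smul_comm t, Prod.smul_mk,
      smul_add, RingHom.id_apply]

/-- The exceptional Jordan algebra `J₃(𝕆)`, as the 27-dimensional space of tuples
`(λ₁, λ₂, λ₃, a, b, c)`. -/
abbrev J3 : Type := ℂ × ℂ × ℂ × Oct × Oct × Oct

def MAj (A : J3) : Oct × Oct × Oct →ₗ[ℂ] Oct × Oct × Oct :=
  MA A.1 A.2.1 A.2.2.1 A.2.2.2.1 A.2.2.2.2.1 A.2.2.2.2.2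

def NAj (A : J3) : Oct × Oct × Oct →ₗ[ℂ] Oct × Oct × Oct :=
  NA A.1 A.2.1 A.2.2.1 A.2.2.2.1 A.2.2.2.2.1 A.2.2.2.2.2

def SODMj (A : J3) : ℂ := SODM A.1 A.2.1 A.2.2.1 A.2.2.2.1 A.2.2.2.2.1 A.2.2.2.2.2

def cartan'j (A : J3) : ℂ := cartan' A.1 A.2.1 A.2.2.1 A.2.2.2.1 A.2.2.2.2.1 A.2.2.2.2.2

def frakSj (A : J3) : ℂ := frakS A.1 A.2.1 A.2.2.1 A.2.2.2.1 A.2.2.2.2.1 A.2.2.2.2.2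

/-- A twisted triality pair: a pair of `ℂ`-linear norm-preserving bijections of `𝕆` with
`T₁(x)·T₂(y) = T₁(x·y)` for all `x, y`. -/
def TwistedPair (T1 T2 : Oct →ₗ[ℂ] Oct) : Prop :=
  Function.Bijective T1 ∧ Function.Bijective T2 ∧
    (∀ x, onormSq (T1 x) = onormSq x) ∧ (∀ x, onormSq (T2 x) = onormSq x) ∧
    ∀ x y, omul (T1 x) (T2 y) = T1 (omul x y)

/-- `K(x) = conj (T₁ x̄)`. -/
def Kmap (T1 : Oct →ₗ[ℂ] Oct) (x : Oct) : Oct := oconj (T1 (oconj x))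

/-- The twisted `Spin₇`-action on `J₃(𝕆)`:
`(T₁,T₂)·(λ₁, λ₂, λ₃, a, b, c) = (λ₁, λ₂, λ₃, T₁(a), K(b), T₂(c))`. -/
def spinAct (T1 T2 : Oct →ₗ[ℂ] Oct) (A : J3) : J3 :=
  (A.1, A.2.1, A.2.2.1, T1 A.2.2.2.1, Kmap T1 A.2.2.2.2.1, T2 A.2.2.2.2.2)

/-- The hermitian matrix `[[λ₁, c, b̄], [c̄, λ₂, a], [b, ā, λ₃]]` attached to `A ∈ J₃(𝕆)`,
with complex scalars embedded as multiples of the unit octonion. -/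
def toMat (A : J3) : Matrix (Fin 3) (Fin 3) Oct :=
  !![A.1 • oone, A.2.2.2.2.2, oconj A.2.2.2.2.1;
     oconj A.2.2.2.2.2, A.2.1 • oone, A.2.2.2.1;
     A.2.2.2.2.1, oconj A.2.2.2.1, A.2.2.1 • oone]

/-- The action of a (special linear) complex `3×3` matrix `C` on `J₃(𝕆)`, sending the hermitian
matrix `M` of `A` to `Cᵀ · M · C` (the entries of `C` being central scalars). -/
def slAct (C : Matrix (Fin 3) (Fin 3) ℂ) (A : J3) : J3 :=
  let M : Matrix (Fin 3) (Fin 3) Oct :=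
    Matrix.of fun i j => ∑ k, ∑ l, (C k i * C l j) • toMat A k l
  (oRe (M 0 0), oRe (M 1 1), oRe (M 2 2), M 1 2, M 2 0, M 0 1)

/-- The coordinates of `A ∈ J₃(𝕆)` in the fixed standard `ℂ`-basis of `ℂ³ × 𝕆³`. -/
def coords (A : J3) : Fin 27 → ℂ :=
  ![A.1, A.2.1, A.2.2.1,
    A.2.2.2.1.1.re, A.2.2.2.1.1.imI, A.2.2.2.1.1.imJ, A.2.2.2.1.1.imK,
    A.2.2.2.1.2.re, A.2.2.2.1.2.imI, A.2.2.2.1.2.imJ, A.2.2.2.1.2.imK,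
    A.2.2.2.2.1.1.re, A.2.2.2.2.1.1.imI, A.2.2.2.2.1.1.imJ, A.2.2.2.2.1.1.imK,
    A.2.2.2.2.1.2.re, A.2.2.2.2.1.2.imI, A.2.2.2.2.1.2.imJ, A.2.2.2.2.1.2.imK,
    A.2.2.2.2.2.1.re, A.2.2.2.2.2.1.imI, A.2.2.2.2.2.1.imJ, A.2.2.2.2.2.1.imK,
    A.2.2.2.2.2.2.re, A.2.2.2.2.2.2.imI, A.2.2.2.2.2.2.imJ, A.2.2.2.2.2.2.imK]

end Oct

/-!
Let `B` be the polar form of the octonion norm. It satisfies `B(xy, z) = B(x, z ȳ) = B(y, x̄ z)`,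
is preserved by norm-preserving maps and is nondegenerate. Moving factors across `B`, the rule
`T₁(x)·T₂(y) = T₁(xy)` yields its two companions `T₁(x)·conj(T₂ z) = T₁(x z̄)` and
`conj(T₁ u)·T₁(x) = T₂(ū x)`. These three rules cover every product occurring in the rows of
`N_A`, so `D` intertwines `N_A` with `N_{(T₁,T₂)·A}`; as `D` is invertible, determinants and
kernels correspond.
-/

theorem LinearMap.det_eq_of_comp_eq {R M M' : Type*} [CommRing R] [AddCommGroup M] [Module R M]
    [AddCommGroup M'] [Module R M'] (e : M ≃ₗ[R] M') {f : M' →ₗ[R] M'} {g : M →ₗ[R] M}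
    (h : f ∘ₗ e = e ∘ₗ g) : LinearMap.det f = LinearMap.det g := by
  have hf : f = (e : M →ₗ[R] M') ∘ₗ g ∘ₗ (e.symm : M' →ₗ[R] M) := by
    rw [← LinearMap.comp_assoc, ← h, LinearMap.comp_assoc, LinearEquiv.comp_coe,
      LinearEquiv.symm_trans_self, LinearEquiv.refl_toLinearMap, LinearMap.comp_id]
  rw [hf, LinearMap.det_conj]

theorem LinearMap.mem_ker_iff_of_comp_eq {R M M' : Type*} [Semiring R] [AddCommMonoid M]
    [Module R M] [AddCommMonoid M'] [Module R M'] {D : M →ₗ[R] M'}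
    (hD : Function.Injective D) {f : M' →ₗ[R] M'} {g : M →ₗ[R] M} (h : f ∘ₗ D = D ∘ₗ g)
    (v : M) : v ∈ LinearMap.ker g ↔ D v ∈ LinearMap.ker f := by
  rw [LinearMap.mem_ker, LinearMap.mem_ker, ← LinearMap.comp_apply, h, LinearMap.comp_apply,
    map_eq_zero_iff D hD]

namespace Oct

theorem oconj_oconj (x : Oct) : oconj (oconj x) = x := by
  simp [oconj]

def polar (x y : Oct) : ℂ :=
  x.1.re * y.1.re + x.1.imI * y.1.imI + x.1.imJ * y.1.imJ + x.1.imK * y.1.imK +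
    x.2.re * y.2.re + x.2.imI * y.2.imI + x.2.imJ * y.2.imJ + x.2.imK * y.2.imK

theorem onormSq_add (x y : Oct) : onormSq (x + y) = onormSq x + onormSq y + 2 * polar x y := by
  simp only [onormSq, polar, Quaternion.normSq_def', Prod.fst_add, Prod.snd_add,
    Quaternion.re_add, Quaternion.imI_add, Quaternion.imJ_add, Quaternion.imK_add]
  ring

theorem polar_omul_left (x y z : Oct) : polar (omul x y) z = polar x (omul z (oconj y)) := by
  simp only [polar, omul, oconj, Quaternion.re_sub, Quaternion.re_add, Quaternion.re_mul,
    Quaternion.imI_sub, Quaternion.imI_add, Quaternion.imI_mul,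
    Quaternion.imJ_sub, Quaternion.imJ_add, Quaternion.imJ_mul,
    Quaternion.imK_sub, Quaternion.imK_add, Quaternion.imK_mul,
    Quaternion.re_star, Quaternion.imI_star, Quaternion.imJ_star, Quaternion.imK_star,
    Quaternion.re_neg, Quaternion.imI_neg, Quaternion.imJ_neg, Quaternion.imK_neg]
  ring

theorem polar_omul_right (x y z : Oct) : polar (omul x y) z = polar y (omul (oconj x) z) := by
  simp only [polar, omul, oconj, Quaternion.re_sub, Quaternion.re_add, Quaternion.re_mul,
    Quaternion.imI_sub, Quaternion.imI_add, Quaternion.imI_mul,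
    Quaternion.imJ_sub, Quaternion.imJ_add, Quaternion.imJ_mul,
    Quaternion.imK_sub, Quaternion.imK_add, Quaternion.imK_mul,
    Quaternion.re_star, Quaternion.imI_star, Quaternion.imJ_star, Quaternion.imK_star,
    Quaternion.re_neg, Quaternion.imI_neg, Quaternion.imJ_neg, Quaternion.imK_neg]
  ring

theorem eq_of_forall_polar_eq {p q : Oct} (h : ∀ w, polar p w = polar q w) : p = q := by
  refine Prod.ext (QuaternionAlgebra.ext ?_ ?_ ?_ ?_) (QuaternionAlgebra.ext ?_ ?_ ?_ ?_)
  · simpa [polar] using h (⟨1, 0, 0, 0⟩, 0)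
  · simpa [polar] using h (⟨0, 1, 0, 0⟩, 0)
  · simpa [polar] using h (⟨0, 0, 1, 0⟩, 0)
  · simpa [polar] using h (⟨0, 0, 0, 1⟩, 0)
  · simpa [polar] using h (0, ⟨1, 0, 0, 0⟩)
  · simpa [polar] using h (0, ⟨0, 1, 0, 0⟩)
  · simpa [polar] using h (0, ⟨0, 0, 1, 0⟩)
  · simpa [polar] using h (0, ⟨0, 0, 0, 1⟩)

theorem eq_of_forall_polar_apply_eq {T : Oct → Oct} (hT : Function.Surjective T) {p q : Oct}
    (h : ∀ u, polar p (T u) = polar q (T u)) : p = q :=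
  eq_of_forall_polar_eq fun w => by
    obtain ⟨u, rfl⟩ := hT w
    exact h u

theorem polar_map_map {T : Oct →ₗ[ℂ] Oct} (hT : ∀ x, onormSq (T x) = onormSq x) (x y : Oct) :
    polar (T x) (T y) = polar x y := by
  have h := hT (x + y)
  rw [map_add, onormSq_add, onormSq_add, hT, hT] at h
  exact mul_left_cancel₀ two_ne_zero (add_left_cancel h)

namespace TwistedPair

variable {T1 T2 : Oct →ₗ[ℂ] Oct}

theorem omul_map_map (h : TwistedPair T1 T2) (x y : Oct) :
    omul (T1 x) (T2 y) = T1 (omul x y) :=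
  h.2.2.2.2 x y

theorem map_omul_oconj (h : TwistedPair T1 T2) (x z : Oct) :
    omul (T1 x) (oconj (T2 z)) = T1 (omul x (oconj z)) := by
  obtain ⟨hT1, -, hN1, -, hmul⟩ := h
  refine eq_of_forall_polar_apply_eq hT1.2 fun u => ?_
  calc polar (omul (T1 x) (oconj (T2 z))) (T1 u)
      = polar (T1 x) (T1 (omul u z)) := by rw [polar_omul_left, oconj_oconj, hmul]
    _ = polar (omul x (oconj z)) u := by rw [polar_map_map hN1, polar_omul_left, oconj_oconj]
    _ = polar (T1 (omul x (oconj z))) (T1 u) := (polar_map_map hN1 _ _).symm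

theorem oconj_map_omul (h : TwistedPair T1 T2) (u x : Oct) :
    omul (oconj (T1 u)) (T1 x) = T2 (omul (oconj u) x) := by
  obtain ⟨-, hT2, hN1, hN2, hmul⟩ := h
  refine eq_of_forall_polar_apply_eq hT2.2 fun v => ?_
  calc polar (omul (oconj (T1 u)) (T1 x)) (T2 v)
      = polar (T1 x) (T1 (omul u v)) := by rw [polar_omul_right, oconj_oconj, hmul]
    _ = polar (omul (oconj u) x) v := by rw [polar_map_map hN1, polar_omul_right, oconj_oconj]
    _ = polar (T2 (omul (oconj u) x)) (T2 v) := (polar_map_map hN2 _ _).symm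

theorem NAj_spinAct_comp (h : TwistedPair T1 T2) (A : J3) :
    NAj (spinAct T1 T2 A) ∘ₗ T1.prodMap (T1.prodMap T2)
      = T1.prodMap (T1.prodMap T2) ∘ₗ NAj A := by
  obtain ⟨l1, l2, l3, a, b, c⟩ := A
  refine LinearMap.ext fun ⟨x, y, z⟩ => ?_
  simp only [NAj, NA, spinAct, Kmap, LinearMap.comp_apply, LinearMap.prodMap_apply,
    LinearMap.coe_mk, AddHom.coe_mk, map_add, map_smul, oconj_oconj, h.omul_map_map,
    h.map_omul_oconj, h.oconj_map_omul]

theorem bijective_prodMap (h : TwistedPair T1 T2) :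
    Function.Bijective (T1.prodMap (T1.prodMap T2)) := by
  rw [LinearMap.coe_prodMap, LinearMap.coe_prodMap]
  exact h.1.prodMap (h.1.prodMap h.2.1)

end TwistedPair

/-- Equivariance of the twisted octonionic eigenvalue problem: for a twisted triality pair
`(T₁, T₂)` and `D(x,y,z) = (T₁ x, T₁ y, T₂ z)`, one has `N_{(T₁,T₂)·A} ∘ D = D ∘ N_A`;
in particular `det N_{(T₁,T₂)·A} = det N_A` and `v ∈ ker N_A ↔ D v ∈ ker N_{(T₁,T₂)·A}`. -/
theorem spin_equivariance (T1 T2 : Oct →ₗ[ℂ] Oct) (h : TwistedPair T1 T2) (A : J3) :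
    NAj (spinAct T1 T2 A) ∘ₗ T1.prodMap (T1.prodMap T2)
        = T1.prodMap (T1.prodMap T2) ∘ₗ NAj A ∧
      LinearMap.det (NAj (spinAct T1 T2 A)) = LinearMap.det (NAj A) ∧
      ∀ v : Oct × Oct × Oct,
        v ∈ LinearMap.ker (NAj A) ↔
          T1.prodMap (T1.prodMap T2) v ∈ LinearMap.ker (NAj (spinAct T1 T2 A)) :=
  have hcomm := h.NAj_spinAct_comp A
  ⟨hcomm, LinearMap.det_eq_of_comp_eq (.ofBijective _ h.bijective_prodMap) hcomm,
    LinearMap.mem_ker_iff_of_comp_eq h.bijective_prodMap.1 hcomm⟩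

end Oct
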